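/- For all integers k ≥ 0, ℓ ≥ 2, and c ≥ 0, the partition λ = (4k+ℓ+c+1, 2k+ℓ+c, ℓ−2) satisfies λ ∉ E_{3,λ1}, and exactly one of the following holds: (1) λ2+λ3 is even and (λ1−1, λ2+1, λ3) ∉ E_{3,λ1−1}; or (2) λ2+λ3 is odd and (λ1−1, λ2, λ3+1) ∈ E_{3,λ1−1}. -/

import Mathlib

/-- Membership in the poset `L(3,n)`: triples `(p₁,p₂,p₃)` with `n ≥ p₁ ≥ p₂ ≥ p₃ ≥ 0`. -/
def L3 (n : ℤ) : Set (ℤ × ℤ × ℤ) :=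
  {p | p.1 ≤ n ∧ p.2.1 ≤ p.1 ∧ p.2.2 ≤ p.2.1 ∧ 0 ≤ p.2.2}

/-- The starting set `S_{3,m}`. -/
def S3 (m : ℤ) : Set (ℤ × ℤ × ℤ) :=
  {p | ∃ k ℓ : ℤ, 0 ≤ k ∧ 0 ≤ ℓ ∧ ℓ ≠ 1 ∧ 4 * k + ℓ ≤ m ∧ 2 * (6 * k + ℓ) ≤ 3 * m ∧
    p = (4 * k + ℓ, 2 * k, 0)}

/-- The dual of a partition in `L(3,m)`. -/
def dual (m : ℤ) (p : ℤ × ℤ × ℤ) : ℤ × ℤ × ℤ :=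
  (m - p.2.2, m - p.2.1, m - p.1)

/-- The end set `E_{3,m} = {λ* : λ ∈ S_{3,m}}`. -/
def E3 (m : ℤ) : Set (ℤ × ℤ × ℤ) := dual m '' S3 m

open Classical in
/-- The order matching `φ`. -/
noncomputable def phi (p : ℤ × ℤ × ℤ) : ℤ × ℤ × ℤ :=
  if p ∈ E3 p.1 then
    (p.1 + 1, p.2.1, p.2.2)
  else if (Even (p.2.1 + p.2.2) ∧ (p.1 - 1, p.2.1 + 1, p.2.2) ∉ E3 (p.1 - 1)) ∨
      (¬ Even (p.2.1 + p.2.2) ∧ (p.1 - 1, p.2.1, p.2.2 + 1) ∈ E3 (p.1 - 1)) then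
    (p.1, p.2.1 + 1, p.2.2)
  else
    (p.1, p.2.1, p.2.2 + 1)

/-!
Every element of `E_{3,m}` has the shape `(m, m - 2k, m - 4k - ℓ)`, so its first two parts differ
by an even number. The partition `λ`, and the neighbour `(λ₁ - 1, λ₂ + 1, λ₃)` of alternative (1),
have first two parts differing by an odd number, so neither lies in an end set. The parity of
`λ₂ + λ₃` is that of `c`; when `c` is odd, `(λ₁ - 1, λ₂, λ₃ + 1)` is the dual of
`(4k + c + 1, 2k, 0) ∈ S_{3,λ₁-1}`.
-/

theorem mem_E3_iff {m : ℤ} {p : ℤ × ℤ × ℤ} :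
    p ∈ E3 m ↔ ∃ k ℓ : ℤ, 0 ≤ k ∧ 0 ≤ ℓ ∧ ℓ ≠ 1 ∧ 4 * k + ℓ ≤ m ∧ 2 * (6 * k + ℓ) ≤ 3 * m ∧
      p = (m, m - 2 * k, m - (4 * k + ℓ)) := by
  constructor
  · rintro ⟨q, ⟨k, ℓ, hk, hℓ, hℓ1, h4, h6, rfl⟩, rfl⟩
    exact ⟨k, ℓ, hk, hℓ, hℓ1, h4, h6, by simp [dual]⟩
  · rintro ⟨k, ℓ, hk, hℓ, hℓ1, h4, h6, rfl⟩
    exact ⟨(4 * k + ℓ, 2 * k, 0), ⟨k, ℓ, hk, hℓ, hℓ1, h4, h6, rfl⟩, by simp [dual]⟩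

theorem even_fst_sub_snd_of_mem_E3 {m : ℤ} {p : ℤ × ℤ × ℤ} (hp : p ∈ E3 m) :
    Even (p.1 - p.2.1) := by
  obtain ⟨k, -, -, -, -, -, -, rfl⟩ := mem_E3_iff.mp hp
  exact ⟨k, by ring⟩

theorem notMem_E3_of_odd_fst_sub_snd {m : ℤ} {p : ℤ × ℤ × ℤ} (hp : Odd (p.1 - p.2.1)) :
    p ∉ E3 m :=
  fun h ↦ Int.not_even_iff_odd.mpr hp (even_fst_sub_snd_of_mem_E3 h)

theorem xor_even_and_odd_and {n : ℤ} {A B : Prop} (hA : Even n → A) (hB : Odd n → B) :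
    Xor (Even n ∧ A) (Odd n ∧ B) := by
  rcases Int.even_or_odd n with hn | hn
  · exact Or.inl ⟨⟨hn, hA hn⟩, fun h ↦ Int.not_odd_iff_even.mpr hn h.1⟩
  · exact Or.inr ⟨⟨hn, hB hn⟩, fun h ↦ Int.not_even_iff_odd.mpr hn h.1⟩

/-- Lemma (C₂): for `k ≥ 0`, `ℓ ≥ 2`, `c ≥ 0`, `λ = (4k+ℓ+c+1, 2k+ℓ+c, ℓ-2)` satisfies
`λ ∉ E_{3,λ₁}` and exactly one of:
(1) `λ₂ + λ₃` even and `(λ₁-1, λ₂+1, λ₃) ∉ E_{3,λ₁-1}`; or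
(2) `λ₂ + λ₃` odd and `(λ₁-1, λ₂, λ₃+1) ∈ E_{3,λ₁-1}`. -/
theorem lem_C2 (k l c : ℤ) (hk : 0 ≤ k) (hl : 2 ≤ l) (hc : 0 ≤ c) :
    ((4 * k + l + c + 1, 2 * k + l + c, l - 2) : ℤ × ℤ × ℤ) ∉ E3 (4 * k + l + c + 1) ∧
    Xor'
      (Even ((2 * k + l + c) + (l - 2)) ∧
        ((4 * k + l + c, 2 * k + l + c + 1, l - 2) : ℤ × ℤ × ℤ) ∉ E3 (4 * k + l + c))
      (Odd ((2 * k + l + c) + (l - 2)) ∧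
        ((4 * k + l + c, 2 * k + l + c, l - 1) : ℤ × ℤ × ℤ) ∈ E3 (4 * k + l + c)) := by
  refine ⟨notMem_E3_of_odd_fst_sub_snd ⟨k, by ring⟩,
    xor_even_and_odd_and (fun _ ↦ notMem_E3_of_odd_fst_sub_snd ⟨k - 1, by ring⟩) fun hodd ↦ ?_⟩
  have hc0 : c ≠ 0 := by rw [Int.odd_iff] at hodd; omega
  refine mem_E3_iff.mpr ⟨k, c + 1, hk, by omega, by omega, by omega, by omega, ?_⟩
  exact Prod.ext rfl (Prod.ext (by ring) (by ring))
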